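/- arXiv:solv-int/9909028 — 2 statements merged into one kernel-verified Lean document; each statement's English description precedes it below -/
import Mathlib

section
/- For every positive integer n, the sum over all permutations σ of {0,1,...,2n-1} of sg(σ) times the product over j from 0 to n-1 of sg(σ(2j+1) - σ(2j)) equals 2^n · n!. -/
open Equiv Equiv.Perm Finset

namespace Stmt0

variable {n : ℕ}

/-- partner in the canonical matching: 2k ↔ 2k+1 -/
def flp (n : ℕ) (x : Fin (2*n)) : Fin (2*n) := ⟨2*(x.1/2) + 1 - x.1 % 2, by omega⟩

lemma flp_invol (n : ℕ) : Function.Involutive (flp n) := by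
  intro x; ext; simp only [flp]; omega

def flpP (n : ℕ) : Perm (Fin (2*n)) := (flp_invol n).toPerm

@[simp] lemma flpP_apply (x : Fin (2*n)) : flpP n x = flp n x := rfl

lemma flp_ne (x : Fin (2*n)) : flp n x ≠ x := by
  intro h
  have h2 := congrArg Fin.val h
  simp only [flp] at h2
  omega

/-- even position -/
def ep (n : ℕ) (j : Fin n) : Fin (2*n) := ⟨2*j.1, by omega⟩
/-- odd position -/
def op (n : ℕ) (j : Fin n) : Fin (2*n) := ⟨2*j.1+1, by omega⟩

lemma flp_ep (j : Fin n) : flp n (ep n j) = op n j := by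
  simp only [flp, ep, op, Fin.ext_iff]; omega

lemma flp_op (j : Fin n) : flp n (op n j) = ep n j := by
  simp only [flp, ep, op, Fin.ext_iff]; omega

lemma pos_cases (i : Fin (2*n)) : i = ep n ⟨i.1/2, by omega⟩ ∨ i = op n ⟨i.1/2, by omega⟩ := by
  simp only [ep, op, Fin.ext_iff]; omega

/-- the partner function induced by σ -/
def qf (σ : Perm (Fin (2*n))) : Perm (Fin (2*n)) := σ * flpP n * σ⁻¹

lemma qf_invol (σ : Perm (Fin (2*n))) (x : Fin (2*n)) : qf σ (qf σ x) = x := by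
  simp [qf, mul_apply, flp_invol n _]

lemma qf_ne (σ : Perm (Fin (2*n))) (x : Fin (2*n)) : qf σ x ≠ x := by
  simp only [qf, mul_apply, ne_eq, flpP_apply]
  intro h
  have : σ (flp n (σ⁻¹ x)) = σ (σ⁻¹ x) := by simpa using h
  exact flp_ne _ (σ.injective this)

lemma qf_apply_sigma_ep (σ : Perm (Fin (2*n))) (j : Fin n) :
    qf σ (σ (ep n j)) = σ (op n j) := by
  simp [qf, mul_apply, flp_ep]

lemma qf_apply_sigma_op (σ : Perm (Fin (2*n))) (j : Fin n) :
    qf σ (σ (op n j)) = σ (ep n j) := by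
  simp [qf, mul_apply, flp_op]

/-- canonical-matching permutations -/
def IsH (σ : Perm (Fin (2*n))) : Prop := ∀ j : Fin n, σ (op n j) = flp n (σ (ep n j))

instance : DecidablePred (IsH (n := n)) := fun _ => by unfold IsH; infer_instance

lemma isH_iff_qf (σ : Perm (Fin (2*n))) : IsH σ ↔ ∀ x, qf σ x = flp n x := by
  constructor
  · intro h x
    have hix : σ (σ.symm x) = x := σ.apply_symm_apply x
    rcases pos_cases (σ.symm x) with hi | hi
    · rw [← hix, hi, qf_apply_sigma_ep, h]
    · rw [← hix, hi, qf_apply_sigma_op, h, flp_invol]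
  · intro h j
    rw [← qf_apply_sigma_ep, h]

def fl2 (S : Finset (Fin n)) : Fin n → Perm (Fin 2) :=
  fun j => if j ∈ S then Equiv.swap 0 1 else 1

def iotE (n : ℕ) : Fin n × Fin 2 ≃ Fin (2*n) where
  toFun p := ⟨2*p.1.1 + p.2.1, by have := p.1.2; have := p.2.2; omega⟩
  invFun x := (⟨x.1/2, by have := x.2; omega⟩, ⟨x.1%2, by omega⟩)
  left_inv p := by
    rcases p with ⟨j, d⟩
    have h1 := j.2; have h2 := d.2
    simp only [Prod.mk.injEq, Fin.ext_iff]
    constructor <;> omega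
  right_inv x := by
    have := x.2
    simp only [Fin.ext_iff]
    omega

def phi (π : Perm (Fin n)) (S : Finset (Fin n)) : Perm (Fin (2*n)) :=
  (iotE n).permCongr (Equiv.prodCongrLeft (fun _ : Fin 2 => π) * Equiv.prodCongrRight (fl2 S))

lemma phi_apply (π : Perm (Fin n)) (S : Finset (Fin n)) (j : Fin n) (d : Fin 2) :
    phi π S (iotE n (j, d)) = iotE n (π j, fl2 S j d) := by
  simp [phi, Equiv.permCongr_apply, Equiv.Perm.mul_apply, Equiv.prodCongrRight_apply,
    Equiv.prodCongrLeft_apply]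

lemma ep_eq (j : Fin n) : ep n j = iotE n (j, 0) := rfl

lemma op_eq (j : Fin n) : op n j = iotE n (j, 1) := rfl

lemma phi_ep_val (π : Perm (Fin n)) (S : Finset (Fin n)) (j : Fin n) :
    (phi π S (ep n j)).1 = 2*(π j).1 + (if j ∈ S then 1 else 0) := by
  rw [ep_eq, phi_apply]
  by_cases hj : j ∈ S <;> simp [iotE, fl2, hj]

lemma phi_op_val (π : Perm (Fin n)) (S : Finset (Fin n)) (j : Fin n) :
    (phi π S (op n j)).1 = 2*(π j).1 + (if j ∈ S then 0 else 1) := by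
  rw [op_eq, phi_apply]
  by_cases hj : j ∈ S <;> simp [iotE, fl2, hj]

lemma sign_phi (π : Perm (Fin n)) (S : Finset (Fin n)) :
    Equiv.Perm.sign (phi π S) = ∏ j : Fin n, (if j ∈ S then (-1 : ℤˣ) else 1) := by
  rw [phi, Equiv.Perm.sign_permCongr, map_mul, Equiv.Perm.sign_prodCongrLeft,
    Equiv.Perm.sign_prodCongrRight]
  have h1 : (∏ _k : Fin 2, Equiv.Perm.sign π) = 1 := by
    rw [Finset.prod_const]
    simp [sq, ← pow_mul]
  rw [h1, one_mul]
  refine Finset.prod_congr rfl fun j _ => ?_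
  by_cases hj : j ∈ S <;> simp [fl2, hj, Equiv.Perm.sign_swap]

lemma isH_phi (π : Perm (Fin n)) (S : Finset (Fin n)) : IsH (phi π S) := by
  intro j
  apply Fin.ext
  have h1 := phi_ep_val π S j
  have h2 := phi_op_val π S j
  by_cases hj : j ∈ S <;>
    · simp only [hj, if_true, if_false] at h1 h2
      simp only [flp, h1, h2]
      omega

lemma phi_inj : Function.Injective (fun p : Perm (Fin n) × Finset (Fin n) => phi p.1 p.2) := by
  rintro ⟨π, S⟩ ⟨π', S'⟩ h
  simp only at h
  have key : ∀ j : Fin n, π j = π' j ∧ (j ∈ S ↔ j ∈ S') := by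
    intro j
    have h1 : (phi π S (ep n j)).1 = (phi π' S' (ep n j)).1 := by rw [h]
    rw [phi_ep_val, phi_ep_val] at h1
    have hp := (π j).2
    have hp' := (π' j).2
    by_cases hj : j ∈ S <;> by_cases hj' : j ∈ S' <;>
      simp only [hj, hj', if_true, if_false] at h1 <;>
      first
        | (exfalso; omega)
        | exact ⟨Fin.ext (by omega), by tauto⟩
  ext1
  · exact Equiv.ext fun j => (key j).1
  · exact Finset.ext fun j => (key j).2

lemma phi_surj (σ : Perm (Fin (2*n))) (hσ : IsH σ) :
    ∃ π : Perm (Fin n), ∃ S : Finset (Fin n), phi π S = σ := by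
  classical
  have hinj : Function.Injective (fun j : Fin n => (⟨(σ (ep n j)).1/2, by have := (σ (ep n j)).2; omega⟩ : Fin n)) := by
    intro j j' hjj'
    by_contra hne
    have hval : (σ (ep n j)).1/2 = (σ (ep n j')).1/2 := by
      simpa [Fin.ext_iff] using hjj'
    have h1 : σ (op n j) = flp n (σ (ep n j)) := hσ j
    have hne1 : σ (ep n j) ≠ σ (ep n j') := fun hc => hne (by
      have := σ.injective hc
      simp only [ep, Fin.ext_iff] at this
      exact Fin.ext (by omega))
    have hne2 : σ (op n j) ≠ σ (ep n j') := fun hc => by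
      have := σ.injective hc
      simp only [ep, op, Fin.ext_iff] at this
      omega
    rw [h1] at hne2
    simp only [flp, Fin.ext_iff, ne_eq] at hne1 hne2
    omega
  have hbij := Finite.injective_iff_bijective.mp hinj
  refine ⟨Equiv.ofBijective _ hbij, Finset.univ.filter (fun j => (σ (ep n j)).1 % 2 = 1), ?_⟩
  have hep : ∀ j : Fin n, phi (Equiv.ofBijective _ hbij)
      (Finset.univ.filter (fun j => (σ (ep n j)).1 % 2 = 1)) (ep n j) = σ (ep n j) := by
    intro j
    apply Fin.ext
    rw [phi_ep_val]
    simp only [Equiv.ofBijective_apply, Finset.mem_filter, Finset.mem_univ, true_and]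
    by_cases hj : (σ (ep n j)).1 % 2 = 1 <;> simp only [hj, if_true, if_false] <;> omega
  apply Equiv.ext
  intro x
  rcases pos_cases x with hx | hx
  · rw [hx]; exact hep _
  · rw [hx]
    have h1 := isH_phi (Equiv.ofBijective _ hbij)
      (Finset.univ.filter (fun j => (σ (ep n j)).1 % 2 = 1)) ⟨x.1/2, by omega⟩
    rw [h1, hep, hσ]

def tm (n : ℕ) (σ : Perm (Fin (2*n))) : ℤ :=
  (Equiv.Perm.sign σ : ℤ) *
    ∏ j : Fin n, Int.sign (((σ (op n j) : Fin (2*n)) : ℤ) - ((σ (ep n j) : Fin (2*n)) : ℤ))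

lemma tm_phi (π : Perm (Fin n)) (S : Finset (Fin n)) : tm n (phi π S) = 1 := by
  have hsign : ((Equiv.Perm.sign (phi π S) : ℤˣ) : ℤ)
      = ∏ j : Fin n, (if j ∈ S then (-1 : ℤ) else 1) := by
    rw [sign_phi]
    push_cast
    refine Finset.prod_congr rfl fun j _ => ?_
    by_cases hj : j ∈ S <;> simp [hj]
  have hprod : ∀ j : Fin n,
      Int.sign (((phi π S (op n j) : Fin (2*n)) : ℤ) - ((phi π S (ep n j) : Fin (2*n)) : ℤ))
      = (if j ∈ S then (-1 : ℤ) else 1) := by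
    intro j
    have h1 := phi_op_val π S j
    have h2 := phi_ep_val π S j
    by_cases hj : j ∈ S <;> simp only [hj, if_true, if_false] at h1 h2 ⊢
    · have hd : (((phi π S (op n j) : Fin (2*n)) : ℤ) - ((phi π S (ep n j) : Fin (2*n)) : ℤ)) = -1 := by
        omega
      rw [hd]; rfl
    · have hd : (((phi π S (op n j) : Fin (2*n)) : ℤ) - ((phi π S (ep n j) : Fin (2*n)) : ℤ)) = 1 := by
        omega
      rw [hd]; rfl
  rw [tm, hsign, Finset.prod_congr rfl (fun j _ => hprod j), ← Finset.prod_mul_distrib]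
  rw [Finset.prod_eq_one]
  intro j _
  by_cases hj : j ∈ S <;> simp [hj]

lemma card_H : (Finset.univ.filter (IsH (n := n))).card = n.factorial * 2^n := by
  classical
  have h := Finset.card_bij (s := (Finset.univ : Finset (Perm (Fin n) × Finset (Fin n))))
    (t := Finset.univ.filter (IsH (n := n)))
    (fun p _ => phi p.1 p.2)
    (fun p _ => by simp [isH_phi])
    (fun p _ q _ hpq => phi_inj hpq)
    (fun σ hσ => by
      obtain ⟨π, S, hps⟩ := phi_surj σ (Finset.mem_filter.mp hσ).2
      exact ⟨(π, S), Finset.mem_univ _, hps⟩)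
  rw [← h, Finset.card_univ, Fintype.card_prod, Fintype.card_perm, Fintype.card_finset,
    Fintype.card_fin]

lemma sum_H : ∑ σ ∈ Finset.univ.filter (IsH (n := n)), tm n σ = (2^n * n.factorial : ℤ) := by
  classical
  have h1 : ∀ σ ∈ Finset.univ.filter (IsH (n := n)), tm n σ = 1 := by
    intro σ hσ
    obtain ⟨π, S, hps⟩ := phi_surj σ (Finset.mem_filter.mp hσ).2
    rw [← hps, tm_phi]
  rw [Finset.sum_congr rfl h1, Finset.sum_const, card_H]
  push_cast
  ring

def bad (σ : Perm (Fin (2*n))) : Finset (Fin (2*n)) :=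
  Finset.univ.filter (fun x => qf σ x ≠ flp n x)

lemma bad_nonempty_iff (σ : Perm (Fin (2*n))) : (bad σ).Nonempty ↔ ¬ IsH σ := by
  rw [isH_iff_qf]
  simp [bad, Finset.filter_nonempty_iff]

def gI (σ : Perm (Fin (2*n))) : Perm (Fin (2*n)) :=
  if h : (bad σ).Nonempty then
    Equiv.swap (qf σ ((bad σ).min' h)) (qf σ (flpP n ((bad σ).min' h))) * σ
  else σ

section Inv

variable (σ : Perm (Fin (2*n))) (h : (bad σ).Nonempty)

lemma min_bad_lt (x : Fin (2*n)) (hx : x.1 < ((bad σ).min' h).1) : qf σ x = flp n x := by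
  by_contra hc
  have : x ∈ bad σ := by simp [bad, hc]
  have := (bad σ).min'_le x this
  omega

lemma min_bad_even : ((bad σ).min' h).1 % 2 = 0 := by
  set a := (bad σ).min' h with ha
  by_contra hodd
  have ha2 := a.2
  have hlt : (⟨a.1 - 1, by omega⟩ : Fin (2*n)).1 < a.1 := by simp; omega
  have h1 := min_bad_lt σ h _ hlt
  have hfl : flp n (⟨a.1 - 1, by omega⟩ : Fin (2*n)) = a := by
    apply Fin.ext; simp [flp]; omega
  rw [hfl] at h1
  have h2 : qf σ a = ⟨a.1 - 1, by omega⟩ := by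
    have h2' := congrArg (qf σ) h1
    rw [qf_invol] at h2'
    exact h2'.symm
  have h3 : a ∈ bad σ := (bad σ).min'_mem h
  simp only [bad, Finset.mem_filter] at h3
  apply h3.2
  rw [h2]
  apply Fin.ext; simp [flp]; omega

lemma min_bad_partner_lb : ((bad σ).min' h).1 + 2 ≤ (qf σ ((bad σ).min' h)).1 := by
  set a := (bad σ).min' h with ha
  set u := qf σ a with hu
  have heven := min_bad_even σ h
  have hane : u ≠ a := qf_ne σ a
  have habad : a ∈ bad σ := (bad σ).min'_mem h
  simp only [bad, Finset.mem_filter] at habad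
  have hflp : (flp n a).1 = a.1 + 1 := by simp [flp]; omega
  have hne1 : u.1 ≠ a.1 + 1 := by
    intro hc
    exact habad.2 (by rw [← hu]; exact Fin.ext (by omega))
  have hnlt : ¬ u.1 < a.1 := by
    intro hc
    have h1 := min_bad_lt σ h u hc
    rw [hu, qf_invol] at h1
    have h2 : flp n a = u := by rw [h1, flp_invol]
    have h3 := congrArg Fin.val h2
    omega
  have : u.1 ≠ a.1 := fun hc => hane (Fin.ext hc)
  omega

lemma min_bad_partner2_lb :
    ((bad σ).min' h).1 + 2 ≤ (qf σ (flpP n ((bad σ).min' h))).1 := by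
  set a := (bad σ).min' h with ha
  set b := flpP n a with hb
  set v := qf σ b with hv
  have heven := min_bad_even σ h
  have hu := min_bad_partner_lb σ h
  have hbval : b.1 = a.1 + 1 := by simp [hb, flpP, Function.Involutive.toPerm, flp]; omega
  have hne1 : v ≠ b := qf_ne σ b
  have hne2 : v ≠ a := by
    intro hc
    have : qf σ a = b := by rw [← hc, hv, qf_invol]
    rw [this] at hu
    omega
  have hnlt : ¬ v.1 < a.1 := by
    intro hc
    have h1 := min_bad_lt σ h v hc
    rw [hv, qf_invol] at h1
    have h2 : flp n b = v := by rw [h1, flp_invol]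
    have h3 := congrArg Fin.val h2
    have h4 : (flp n b).1 = 2*(b.1/2) + 1 - b.1 % 2 := rfl
    omega
  have : v.1 ≠ b.1 := fun hc => hne1 (Fin.ext hc)
  have : v.1 ≠ a.1 := fun hc => hne2 (Fin.ext hc)
  omega

lemma min_bad_partners_ne :
    qf σ ((bad σ).min' h) ≠ qf σ (flpP n ((bad σ).min' h)) := by
  intro hc
  have := (qf σ).injective hc
  have h2 : ((bad σ).min' h).1 ≠ (flpP n ((bad σ).min' h)).1 := by
    have := flp_ne ((bad σ).min' h)
    simp only [flpP_apply]
    exact fun hc2 => this (Fin.ext hc2.symm)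
  exact h2 (congrArg Fin.val this)

end Inv

lemma gI_eq (σ : Perm (Fin (2*n))) (h : (bad σ).Nonempty) :
    gI σ = Equiv.swap (qf σ ((bad σ).min' h)) (qf σ (flpP n ((bad σ).min' h))) * σ :=
  dif_pos h

lemma qf_conj (σ w : Perm (Fin (2*n))) (hw : w⁻¹ = w) (x : Fin (2*n)) :
    qf (w * σ) x = w (qf σ (w x)) := by
  simp only [qf, mul_inv_rev, hw, Equiv.Perm.mul_apply]

lemma flpP_min_val (σ : Perm (Fin (2*n))) (h : (bad σ).Nonempty) :
    (flpP n ((bad σ).min' h)).1 = ((bad σ).min' h).1 + 1 := by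
  have heven := min_bad_even σ h
  show (flp n _).1 = _
  simp only [flp]
  omega

lemma qf_gI_lt (σ : Perm (Fin (2*n))) (h : (bad σ).Nonempty) (x : Fin (2*n))
    (hx : x.1 < ((bad σ).min' h).1) : qf (gI σ) x = flp n x := by
  have hu := min_bad_partner_lb σ h
  have hv := min_bad_partner2_lb σ h
  rw [gI_eq σ h, qf_conj σ _ (Equiv.swap_inv _ _)]
  have hfx : (flp n x).1 ≤ x.1 + 1 := by simp only [flp]; omega
  have hx1 : Equiv.swap (qf σ ((bad σ).min' h)) (qf σ (flpP n ((bad σ).min' h))) x = x :=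
    Equiv.swap_apply_of_ne_of_ne (fun hc => by have := congrArg Fin.val hc; omega)
      (fun hc => by have := congrArg Fin.val hc; omega)
  rw [hx1, min_bad_lt σ h x hx]
  exact Equiv.swap_apply_of_ne_of_ne
    (fun hc => by have := congrArg Fin.val hc; omega)
    (fun hc => by have := congrArg Fin.val hc; omega)

lemma qf_gI_min (σ : Perm (Fin (2*n))) (h : (bad σ).Nonempty) :
    qf (gI σ) ((bad σ).min' h) = qf σ (flpP n ((bad σ).min' h)) := by
  have hu := min_bad_partner_lb σ h
  have hv := min_bad_partner2_lb σ h
  rw [gI_eq σ h, qf_conj σ _ (Equiv.swap_inv _ _)]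
  have hx1 : Equiv.swap (qf σ ((bad σ).min' h)) (qf σ (flpP n ((bad σ).min' h)))
      ((bad σ).min' h) = (bad σ).min' h :=
    Equiv.swap_apply_of_ne_of_ne (fun hc => by have := congrArg Fin.val hc; omega)
      (fun hc => by have := congrArg Fin.val hc; omega)
  rw [hx1, Equiv.swap_apply_left]

lemma qf_gI_min2 (σ : Perm (Fin (2*n))) (h : (bad σ).Nonempty) :
    qf (gI σ) (flpP n ((bad σ).min' h)) = qf σ ((bad σ).min' h) := by
  have hu := min_bad_partner_lb σ h
  have hv := min_bad_partner2_lb σ h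
  have hb := flpP_min_val σ h
  rw [gI_eq σ h, qf_conj σ _ (Equiv.swap_inv _ _)]
  have hx1 : Equiv.swap (qf σ ((bad σ).min' h)) (qf σ (flpP n ((bad σ).min' h)))
      (flpP n ((bad σ).min' h)) = flpP n ((bad σ).min' h) :=
    Equiv.swap_apply_of_ne_of_ne (fun hc => by have := congrArg Fin.val hc; omega)
      (fun hc => by have := congrArg Fin.val hc; omega)
  rw [hx1, Equiv.swap_apply_right]

lemma min_bad_mem_gI (σ : Perm (Fin (2*n))) (h : (bad σ).Nonempty) :
    ((bad σ).min' h) ∈ bad (gI σ) := by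
  have hv := min_bad_partner2_lb σ h
  have heven := min_bad_even σ h
  refine Finset.mem_filter.mpr ⟨Finset.mem_univ _, ?_⟩
  rw [qf_gI_min σ h]
  intro hc
  have h1 := congrArg Fin.val hc
  have hfl : (flp n ((bad σ).min' h)).1
      = 2*(((bad σ).min' h).1/2) + 1 - ((bad σ).min' h).1 % 2 := rfl
  omega

lemma bad_gI_nonempty (σ : Perm (Fin (2*n))) (h : (bad σ).Nonempty) :
    (bad (gI σ)).Nonempty := ⟨_, min_bad_mem_gI σ h⟩

lemma min_bad_gI (σ : Perm (Fin (2*n))) (h : (bad σ).Nonempty) :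
    (bad (gI σ)).min' (bad_gI_nonempty σ h) = (bad σ).min' h := by
  apply le_antisymm
  · exact Finset.min'_le _ _ (min_bad_mem_gI σ h)
  · apply Finset.le_min'
    intro y hy
    by_contra hc
    push_neg at hc
    have hylt : y.1 < ((bad σ).min' h).1 := hc
    have := qf_gI_lt σ h y hylt
    simp only [bad, Finset.mem_filter] at hy
    exact hy.2 this


lemma gI_gI (σ : Perm (Fin (2*n))) (h : (bad σ).Nonempty) : gI (gI σ) = σ := by
  rw [gI_eq (gI σ) (bad_gI_nonempty σ h), min_bad_gI σ h, qf_gI_min σ h, qf_gI_min2 σ h,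
    gI_eq σ h, Equiv.swap_comm, ← mul_assoc, Equiv.swap_mul_self, one_mul]

lemma factor_gI (σ : Perm (Fin (2*n))) (h : (bad σ).Nonempty) (j : Fin n) :
    Int.sign (((gI σ) (op n j) : ℤ) - ((gI σ) (ep n j) : ℤ))
      = Int.sign ((σ (op n j) : ℤ) - (σ (ep n j) : ℤ)) := by
  have hu := min_bad_partner_lb σ h
  have hv := min_bad_partner2_lb σ h
  have hb := flpP_min_val σ h
  rw [gI_eq σ h]
  simp only [Equiv.Perm.mul_apply]
  set x := σ (ep n j) with hx
  set y := σ (op n j) with hy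
  have hyx : qf σ x = y := qf_apply_sigma_ep σ j
  have hxy : qf σ y = x := qf_apply_sigma_op σ j
  by_cases h1 : x = qf σ ((bad σ).min' h)
  · have hy2 : y = (bad σ).min' h := by rw [← hyx, h1, qf_invol]
    rw [h1, hy2, Equiv.swap_apply_left]
    rw [Equiv.swap_apply_of_ne_of_ne (x := (bad σ).min' h)
      (fun hc => by have := congrArg Fin.val hc; omega)
      (fun hc => by have := congrArg Fin.val hc; omega)]
    rw [Int.sign_eq_neg_one_of_neg (by omega), Int.sign_eq_neg_one_of_neg (by omega)]
  by_cases h2 : x = qf σ (flpP n ((bad σ).min' h))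
  · have hy2 : y = flpP n ((bad σ).min' h) := by rw [← hyx, h2, qf_invol]
    rw [h2, hy2, Equiv.swap_apply_right]
    rw [Equiv.swap_apply_of_ne_of_ne (x := flpP n ((bad σ).min' h))
      (fun hc => by have := congrArg Fin.val hc; omega)
      (fun hc => by have := congrArg Fin.val hc; omega)]
    rw [Int.sign_eq_neg_one_of_neg (by omega), Int.sign_eq_neg_one_of_neg (by omega)]
  by_cases h3 : y = qf σ ((bad σ).min' h)
  · have hx2 : x = (bad σ).min' h := by rw [← hxy, h3, qf_invol]
    rw [h3, hx2, Equiv.swap_apply_left]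
    rw [Equiv.swap_apply_of_ne_of_ne (x := (bad σ).min' h)
      (fun hc => by have := congrArg Fin.val hc; omega)
      (fun hc => by have := congrArg Fin.val hc; omega)]
    rw [Int.sign_eq_one_of_pos (by omega), Int.sign_eq_one_of_pos (by omega)]
  by_cases h4 : y = qf σ (flpP n ((bad σ).min' h))
  · have hx2 : x = flpP n ((bad σ).min' h) := by rw [← hxy, h4, qf_invol]
    rw [h4, hx2, Equiv.swap_apply_right]
    rw [Equiv.swap_apply_of_ne_of_ne (x := flpP n ((bad σ).min' h))
      (fun hc => by have := congrArg Fin.val hc; omega)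
      (fun hc => by have := congrArg Fin.val hc; omega)]
    rw [Int.sign_eq_one_of_pos (by omega), Int.sign_eq_one_of_pos (by omega)]
  rw [Equiv.swap_apply_of_ne_of_ne h1 h2, Equiv.swap_apply_of_ne_of_ne h3 h4]

lemma tm_gI (σ : Perm (Fin (2*n))) (h : (bad σ).Nonempty) : tm n (gI σ) = - tm n σ := by
  have hprod : ∏ j : Fin n, Int.sign (((gI σ) (op n j) : ℤ) - ((gI σ) (ep n j) : ℤ))
      = ∏ j : Fin n, Int.sign ((σ (op n j) : ℤ) - (σ (ep n j) : ℤ)) :=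
    Finset.prod_congr rfl fun j _ => factor_gI σ h j
  rw [tm, tm, hprod, gI_eq σ h, map_mul, Equiv.Perm.sign_swap (min_bad_partners_ne σ h)]
  push_cast
  ring

lemma notIsH_gI (σ : Perm (Fin (2*n))) (h : (bad σ).Nonempty) : ¬ IsH (gI σ) :=
  (bad_nonempty_iff _).mp (bad_gI_nonempty σ h)

lemma gI_ne (σ : Perm (Fin (2*n))) (h : (bad σ).Nonempty) : gI σ ≠ σ := by
  intro hc
  have h1 : gI σ (σ⁻¹ (qf σ ((bad σ).min' h))) = σ (σ⁻¹ (qf σ ((bad σ).min' h))) := by rw [hc]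
  rw [gI_eq σ h] at h1
  simp only [Equiv.Perm.mul_apply, Equiv.Perm.inv_def, Equiv.apply_symm_apply, Equiv.swap_apply_left] at h1
  exact (min_bad_partners_ne σ h) h1.symm

lemma sum_notH : ∑ σ ∈ Finset.univ.filter (fun σ => ¬ IsH (n := n) σ), tm n σ = 0 := by
  refine Finset.sum_involution (fun σ _ => gI σ) ?_ ?_ ?_ ?_
  · intro σ hσ
    rw [tm_gI σ ((bad_nonempty_iff σ).mpr (Finset.mem_filter.mp hσ).2)]
    ring
  · intro σ hσ _
    exact gI_ne σ ((bad_nonempty_iff σ).mpr (Finset.mem_filter.mp hσ).2)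
  · intro σ hσ
    simp only [Finset.mem_filter, Finset.mem_univ, true_and]
    exact notIsH_gI σ ((bad_nonempty_iff σ).mpr (Finset.mem_filter.mp hσ).2)
  · intro σ hσ
    exact gI_gI σ ((bad_nonempty_iff σ).mpr (Finset.mem_filter.mp hσ).2)

lemma total (n : ℕ) : ∑ σ : Perm (Fin (2*n)), tm n σ = 2^n * n.factorial := by
  rw [← Finset.sum_filter_add_sum_filter_not Finset.univ (IsH (n := n)) (tm n),
    sum_H, sum_notH, add_zero]

end Stmt0

/-- For every positive integer `n`,
`∑_{σ ∈ S_{2n}} sgn(σ) ∏_{j=0}^{n-1} sg(σ(2j+1) - σ(2j)) = 2^n · n!`,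
where `sg` of a nonzero integer is its sign. -/
theorem stmt0 (n : ℕ) (hn : 0 < n) :
    ∑ σ : Equiv.Perm (Fin (2 * n)),
      (Equiv.Perm.sign σ : ℤ) *
        ∏ j : Fin n,
          Int.sign (((σ ⟨2 * j.1 + 1, by have := j.isLt; omega⟩ : Fin (2 * n)) : ℤ)
            - ((σ ⟨2 * j.1, by have := j.isLt; omega⟩ : Fin (2 * n)) : ℤ))
    = 2 ^ n * n.factorial :=
  Stmt0.total n
end

section
/- Recursion from the Fay identity: suppose functions τ_n(t) (n ∈ ℤ) satisfy the three-term Fay relation τ_{N-1}(t) τ_N(t - [u⁻¹]) = τ_N(t) τ_{N-1}(t-[u⁻¹]) + u⁻¹ (τ_N(t) ∂_{t_1} τ_{N-1}(t-[u⁻¹]) - τ_{N-1}(t-[u⁻¹]) ∂_{t_1} τ_N(t)) + u⁻² τ_{N+1}(t) τ_{N-2}(t-[u⁻¹]). Define Ψ_n(t,u) = u^n τ_n(t-[u⁻¹])/τ_{n+1}(t) e^{ξ(t,u)} and h_n(t) = τ_{n+1}(t)²/(τ_n(t) τ_{n+2}(t)). Then Ψ_n(t,u) = h_{n-1}(t)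 ∂_{t_1} Ψ_{n-1}(t,u) + Ψ_{n-2}(t,u), assuming all τ_n are nonvanishing and smooth. -/
/-- The shifted time sequence `t - [u⁻¹]`, where `[u⁻¹] = (u⁻¹, u⁻²/2, u⁻³/3, …)`;
`t : ℕ → ℝ` records `(t_1, t_2, …)` with `t k = t_{k+1}`. -/
noncomputable def shiftT (t : ℕ → ℝ) (u : ℝ) : ℕ → ℝ :=
  fun k => t k - u⁻¹ ^ (k + 1) / (k + 1)

/-- `ξ(t, u) = ∑_{k ≥ 1} t_k u^k`. -/
noncomputable def xiF (t : ℕ → ℝ) (u : ℝ) : ℝ := ∑' k : ℕ, t k * u ^ (k + 1)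

/-- The partial derivative `∂/∂t_1` of a function of `t = (t_1, t_2, …)`. -/
noncomputable def D1 (f : (ℕ → ℝ) → ℝ) (t : ℕ → ℝ) : ℝ :=
  deriv (fun s => f (Function.update t 0 s)) (t 0)

/-- The BKP wave function `Ψ_n(t, u) = u^n τ_n(t - [u⁻¹]) / τ_{n+1}(t) · e^{ξ(t,u)}`. -/
noncomputable def PsiW (τ : ℤ → (ℕ → ℝ) → ℝ) (n : ℤ) (t : ℕ → ℝ) (u : ℝ) : ℝ :=
  u ^ n * τ n (shiftT t u) / τ (n + 1) t * Real.exp (xiF t u)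

lemma shift_update (t : ℕ → ℝ) (u x : ℝ) :
    shiftT (Function.update t 0 x) u = Function.update (shiftT t u) 0 (x - u⁻¹) := by
  funext k
  rcases Nat.eq_zero_or_pos k with hk | hk
  · subst hk; simp [shiftT]
  · have : k ≠ 0 := hk.ne'
    simp [shiftT, Function.update_of_ne this]

lemma xi_update (t : ℕ → ℝ) (u x : ℝ) (hsum : Summable fun k : ℕ => t k * u ^ (k + 1)) :
    xiF (Function.update t 0 x) u = xiF t u + (x - t 0) * u := by
  have h1 : ∀ k : ℕ, (Function.update t 0 x) k * u ^ (k + 1)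
      = t k * u ^ (k + 1) + (if k = 0 then (x - t 0) * u else 0) := by
    intro k
    rcases Nat.eq_zero_or_pos k with hk | hk
    · subst hk; simp [Function.update_self]; ring
    · simp [Function.update_of_ne hk.ne', hk.ne']
  have h2 : Summable (fun k : ℕ => if k = 0 then (x - t 0) * u else 0) :=
    (hasSum_ite_eq 0 ((x - t 0) * u)).summable
  calc xiF (Function.update t 0 x) u
      = ∑' k : ℕ, (t k * u ^ (k + 1) + (if k = 0 then (x - t 0) * u else 0)) := by
        unfold xiF; exact tsum_congr h1
    _ = xiF t u + (x - t 0) * u := by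
        rw [Summable.tsum_add hsum h2, (hasSum_ite_eq 0 ((x - t 0) * u)).tsum_eq]; rfl


/-- recursion from the Fay identity: if the nonvanishing smooth
functions `τ_n` satisfy the three-term Fay relation
`τ_{N-1}(t) τ_N(t-[u⁻¹]) = τ_N(t) τ_{N-1}(t-[u⁻¹])
 + u⁻¹ (τ_N(t) ∂_{t₁}τ_{N-1}(t-[u⁻¹]) - τ_{N-1}(t-[u⁻¹]) ∂_{t₁}τ_N(t))
 + u⁻² τ_{N+1}(t) τ_{N-2}(t-[u⁻¹])`,
then with `h_n(t) = τ_{n+1}(t)²/(τ_n(t) τ_{n+2}(t))` one has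
`Ψ_n(t,u) = h_{n-1}(t) ∂_{t₁}Ψ_{n-1}(t,u) + Ψ_{n-2}(t,u)`. -/
theorem stmt15 (τ : ℤ → (ℕ → ℝ) → ℝ) (u : ℝ) (hu : u ≠ 0) (t : ℕ → ℝ)
    (hne : ∀ (n : ℤ) (s : ℕ → ℝ), τ n s ≠ 0)
    (hsmooth : ∀ (n : ℤ) (s : ℕ → ℝ),
      ContDiff ℝ (⊤ : ℕ∞) (fun x : ℝ => τ n (Function.update s 0 x)))
    (hsum : Summable fun k : ℕ => t k * u ^ (k + 1))
    (hFay : ∀ (N : ℤ) (s : ℕ → ℝ),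
      τ (N - 1) s * τ N (shiftT s u) =
        τ N s * τ (N - 1) (shiftT s u) +
          u⁻¹ * (τ N s * D1 (τ (N - 1)) (shiftT s u)
            - τ (N - 1) (shiftT s u) * D1 (τ N) s) +
          u⁻¹ ^ 2 * τ (N + 1) s * τ (N - 2) (shiftT s u))
    (n : ℤ) :
    PsiW τ n t u =
      (τ n t ^ 2 / (τ (n - 1) t * τ (n + 1) t)) *
          D1 (fun s => PsiW τ (n - 1) s u) t
        + PsiW τ (n - 2) t u := by
  set s' := shiftT t u with hs'
  -- derivatives of the pieces
  have hgA : HasDerivAt (fun y => τ (n - 1) (Function.update s' 0 y))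
      (D1 (τ (n - 1)) s') (s' 0) := by
    have hd : DifferentiableAt ℝ (fun y => τ (n - 1) (Function.update s' 0 y)) (s' 0) :=
      ((hsmooth (n - 1) s').differentiable (by simp)).differentiableAt
    simpa [D1] using hd.hasDerivAt
  have hA : HasDerivAt (fun x : ℝ => τ (n - 1) (Function.update s' 0 (x - u⁻¹)))
      (D1 (τ (n - 1)) s') (t 0) := by
    have h0 : s' 0 = t 0 - u⁻¹ := by simp [hs', shiftT]
    have hgA' : HasDerivAt (fun y => τ (n - 1) (Function.update s' 0 y))
        (D1 (τ (n - 1)) s') (id (t 0) - u⁻¹) := by simpa [h0] using hgA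
    have := hgA'.comp (t 0) ((hasDerivAt_id (t 0)).sub_const u⁻¹)
    simpa using HasDerivAt.comp_sub_const (t 0) u⁻¹ (by simpa using hgA')
  have hB : HasDerivAt (fun x : ℝ => τ n (Function.update t 0 x)) (D1 (τ n) t) (t 0) := by
    have hd : DifferentiableAt ℝ (fun x => τ n (Function.update t 0 x)) (t 0) :=
      ((hsmooth n t).differentiable (by simp)).differentiableAt
    simpa [D1] using hd.hasDerivAt
  have hE : HasDerivAt (fun x : ℝ => Real.exp (xiF t u + (x - t 0) * u))
      (Real.exp (xiF t u) * u) (t 0) := by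
    have hi : HasDerivAt (fun x : ℝ => xiF t u + (x - t 0) * u) u (t 0) := by
      simpa using (((hasDerivAt_id (t 0)).sub_const (t 0)).mul_const u).const_add (xiF t u)
    simpa using hi.exp
  have hBne : τ n t ≠ 0 := hne n t
  -- the function whose derivative is D1 Ψ_{n-1}
  have hfun : (fun x : ℝ => PsiW τ (n - 1) (Function.update t 0 x) u)
      = fun x : ℝ => u ^ (n - 1) * τ (n - 1) (Function.update s' 0 (x - u⁻¹)) /
          τ n (Function.update t 0 x) * Real.exp (xiF t u + (x - t 0) * u) := by
    funext x
    rw [PsiW, shift_update, xi_update t u x hsum]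
    norm_num
    rfl
  have hD : HasDerivAt (fun x : ℝ => PsiW τ (n - 1) (Function.update t 0 x) u)
      (((u ^ (n - 1) * D1 (τ (n - 1)) s' * τ n (Function.update t 0 (t 0)) -
          u ^ (n - 1) * τ (n - 1) (Function.update s' 0 (t 0 - u⁻¹)) * D1 (τ n) t) /
          τ n (Function.update t 0 (t 0)) ^ 2) * Real.exp (xiF t u + (t 0 - t 0) * u) +
        (u ^ (n - 1) * τ (n - 1) (Function.update s' 0 (t 0 - u⁻¹)) /
          τ n (Function.update t 0 (t 0))) * (Real.exp (xiF t u) * u)) (t 0) := by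
    rw [hfun]
    have hBne' : τ n (Function.update t 0 (t 0)) ≠ 0 := hne _ _
    exact ((hA.const_mul (u ^ (n - 1))).div hB hBne').mul hE
  have hupd : Function.update s' 0 (t 0 - u⁻¹) = s' := by
    have h0 : s' 0 = t 0 - u⁻¹ := by simp [hs', shiftT]
    rw [← h0, Function.update_eq_self]
  have hupd2 : Function.update t 0 (t 0) = t := Function.update_eq_self 0 t
  have hDval : D1 (fun s => PsiW τ (n - 1) s u) t =
      ((u ^ (n - 1) * D1 (τ (n - 1)) s' * τ n t -
          u ^ (n - 1) * τ (n - 1) s' * D1 (τ n) t) / τ n t ^ 2) * Real.exp (xiF t u) +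
        (u ^ (n - 1) * τ (n - 1) s' / τ n t) * (Real.exp (xiF t u) * u) := by
    have := hD.deriv
    rw [hupd, hupd2] at this
    simpa [D1] using this
  -- the Fay identity, cleared of inverses
  have hF := hFay n t
  rw [← hs'] at hF
  -- algebra
  rw [PsiW, PsiW, hDval, ← hs']
  have hz2 : u ^ (n - 1) = u ^ (n - 2) * u := by
    have h : n - 1 = n - 2 + 1 := by ring
    rw [h, zpow_add_one₀ hu]
  have hz1 : u ^ n = u ^ (n - 2) * u ^ 2 := by
    have h : n = n - 1 + 1 := by ring
    rw [h, zpow_add_one₀ hu, hz2]; ring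
  have hn1 : n - 2 + 1 = n - 1 := by ring
  rw [hz1, hz2, hn1]
  have hEpos : Real.exp (xiF t u) ≠ 0 := (Real.exp_pos _).ne'
  have h1 : τ (n - 1) t ≠ 0 := hne (n - 1) t
  have h2 : τ (n + 1) t ≠ 0 := hne (n + 1) t
  field_simp at hF
  have hF2 : τ (n - 1) t * τ n s' * u ^ 2 =
      τ n t * τ (n - 1) s' * u ^ 2 +
        (τ n t * D1 (τ (n - 1)) s' - τ (n - 1) s' * D1 (τ n) t) * u +
        τ (n + 1) t * τ (n - 2) s' := by
    apply mul_right_cancel₀ hu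
    linear_combination u * hF
  field_simp
  linear_combination hF2
end
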